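/- arXiv:1908.05405 — 2 statements merged into one kernel-verified Lean document; each statement's English description precedes it below -/
import Mathlib

section
/- Suppose the intensities satisfy the GARCH recursions λ₊(t_i) = ω₊ + α₊ ε²(t_i) + β λ₊(t_{i−1}) and λ₋(t_i) = ω₋ + α₋ ε²(t_i) + β λ₋(t_{i−1}) with common parameter β (i.e. β₊ = β₋ = β), and define h(t_i) = δ²(λ₊(t_{i−1}) + λ₋(t_{i−1})). Then the conditional variance process satisfies the GARCH(1,1) recursion h(t_i) = δ²(ω₊ + ω₋) + β h(t_{i−1}) + δ²(α₊ + α₋) ε²(t_{i−1}). -/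
/-- If the intensities follow the GARCH recursions
`λ₊(tᵢ) = ω₊ + α₊ ε²(tᵢ) + β λ₊(tᵢ₋₁)` and `λ₋(tᵢ) = ω₋ + α₋ ε²(tᵢ) + β λ₋(tᵢ₋₁)` with a
common parameter `β`, and `h(tᵢ) = δ² (λ₊(tᵢ₋₁) + λ₋(tᵢ₋₁))`, then the conditional variance
satisfies the GARCH(1,1) recursion
`h(tᵢ) = δ²(ω₊ + ω₋) + β h(tᵢ₋₁) + δ²(α₊ + α₋) ε²(tᵢ₋₁)`. -/
theorem garch_intensity_variance_recursion
    (δ ωp ωm αp αm β : ℝ)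
    (lp lm ε h : ℕ → ℝ)
    (hlp : ∀ i, lp (i + 1) = ωp + αp * (ε (i + 1)) ^ 2 + β * lp i)
    (hlm : ∀ i, lm (i + 1) = ωm + αm * (ε (i + 1)) ^ 2 + β * lm i)
    (hh : ∀ i, h (i + 1) = δ ^ 2 * (lp i + lm i)) :
    ∀ i, h (i + 2) =
      δ ^ 2 * (ωp + ωm) + β * h (i + 1) + δ ^ 2 * (αp + αm) * (ε (i + 1)) ^ 2 := by
  intro i
  have := hh (i + 1)
  rw [show i + 1 + 1 = i + 2 from rfl] at this
  rw [this, hlp i, hlm i, hh i]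
  ring
end

section
/- Let N₊ and N₋ be independent Poisson random variables with means λ₊τ and λ₋τ, where λ₊, λ₋, τ > 0, let δ > 0, and let λ̃₊, λ̃₋ > 0 satisfy the variance-preserving condition λ̃₊ + λ̃₋ = λ₊ + λ₋. Define Z = exp( N₊ log(λ̃₊/λ₊) + N₋ log(λ̃₋/λ₋) ). Then the variance of X = δ(N₊ − N₋) under the measure Q with density Z equals its variance under P: E[ (δ(N₊ − N₋) − δ(λ̃₊ − λ̃₋)τ)² · Z ] = δ²(λ₊ + λ₋)τ. -/
/-!
Under `μ` the pair `(N₊, N₋)` has law `Po(λ₊τ) ⊗ Po(λ₋τ)`, and `Z = a ^ N₊ * b ^ N₋` with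
`a = λ̃₊/λ₊`, `b = λ̃₋/λ₋`. Tilting `Po(r)` by `a ^ n` gives `exp ((a - 1) r) • Po(a r)`, so `Z`
tilts the joint law to `exp ((λ̃₊ + λ̃₋ - λ₊ - λ₋) τ) • Po(λ̃₊τ) ⊗ Po(λ̃₋τ)`, and the
variance-preserving condition makes the constant `1`. The integral is therefore the variance of
`δ (M₊ - M₋)` for independent `M± ~ Po(λ̃± τ)`, i.e. `δ² (λ̃₊ + λ̃₋) τ`. The Poisson moments come
from Stein's identity `E[N f(N)] = r E[f(N + 1)]`.
-/

open MeasureTheory ProbabilityTheory Real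
open scoped NNReal ENNReal Nat

namespace ProbabilityTheory

variable {r : ℝ≥0} {f : ℕ → ℝ}

lemma exp_neg_mul_pow_div_factorial_succ_mul (r : ℝ≥0) (n : ℕ) :
    exp (-r) * r ^ (n + 1) / (n + 1)! * (n + 1 : ℕ) = r * (exp (-r) * r ^ n / n !) := by
  rw [Nat.factorial_succ]; push_cast; field_simp; ring

lemma integrable_natCast_mul_poissonMeasure
    (hf : Integrable (fun n => f (n + 1)) (poissonMeasure r)) :
    Integrable (fun n => n * f n) (poissonMeasure r) := by
  rw [integrable_poissonMeasure_iff] at hf ⊢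
  rw [← summable_nat_add_iff 1]
  refine (hf.mul_left (r : ℝ)).congr fun n => ?_
  rw [norm_mul, Real.norm_natCast, ← mul_assoc, ← exp_neg_mul_pow_div_factorial_succ_mul]
  ring

lemma integral_natCast_mul_poissonMeasure
    (hf : Integrable (fun n => f (n + 1)) (poissonMeasure r)) :
    ∫ n, n * f n ∂poissonMeasure r = r * ∫ n, f (n + 1) ∂poissonMeasure r := by
  have h₁ := (hasSum_integral_poissonMeasure hf).mul_left (r : ℝ)
  have h₂ := (hasSum_nat_add_iff' 1).2
    (hasSum_integral_poissonMeasure (integrable_natCast_mul_poissonMeasure hf))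
  simp only [Finset.sum_range_one, Nat.cast_zero, zero_mul, smul_zero, sub_zero] at h₂
  refine h₂.unique (h₁.congr_fun fun n => ?_)
  rw [smul_eq_mul, smul_eq_mul, ← mul_assoc, exp_neg_mul_pow_div_factorial_succ_mul, mul_assoc]

variable (r)

lemma integrable_natCast_poissonMeasure :
    Integrable (fun n : ℕ => (n : ℝ)) (poissonMeasure r) := by
  simpa using integrable_natCast_mul_poissonMeasure (f := fun _ => 1) (integrable_const 1)

lemma integral_natCast_poissonMeasure : ∫ n : ℕ, (n : ℝ) ∂poissonMeasure r = r := by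
  simpa using integral_natCast_mul_poissonMeasure (f := fun _ => 1) (r := r) (integrable_const 1)

lemma integrable_natCast_add_one_poissonMeasure :
    Integrable (fun n : ℕ => ((n + 1 : ℕ) : ℝ)) (poissonMeasure r) := by
  push_cast
  exact (integrable_natCast_poissonMeasure r).add (integrable_const 1)

lemma memLp_natCast_poissonMeasure : MemLp (fun n : ℕ => (n : ℝ)) 2 (poissonMeasure r) := by
  rw [memLp_two_iff_integrable_sq .of_discrete]
  simpa [sq] using
    integrable_natCast_mul_poissonMeasure (integrable_natCast_add_one_poissonMeasure r)

lemma integral_natCast_sq_poissonMeasure :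
    ∫ n : ℕ, (n : ℝ) ^ 2 ∂poissonMeasure r = r * (r + 1) := by
  simp_rw [sq]
  rw [integral_natCast_mul_poissonMeasure (integrable_natCast_add_one_poissonMeasure r)]
  push_cast
  rw [integral_add (integrable_natCast_poissonMeasure r) (integrable_const 1),
    integral_natCast_poissonMeasure]
  simp

lemma variance_natCast_poissonMeasure : Var[fun n : ℕ => (n : ℝ); poissonMeasure r] = r := by
  rw [variance_eq_sub (memLp_natCast_poissonMeasure r)]
  simp only [Pi.pow_apply, integral_natCast_sq_poissonMeasure, integral_natCast_poissonMeasure]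
  ring

lemma poissonMeasure_withDensity_pow (a : ℝ≥0) :
    (poissonMeasure r).withDensity (fun n => ((a ^ n : ℝ≥0) : ℝ≥0∞)) =
      ENNReal.ofReal (exp ((a - 1) * r)) • poissonMeasure (a * r) := by
  refine Measure.ext_iff_singleton.2 fun n => ?_
  rw [withDensity_apply _ (measurableSet_singleton n), lintegral_singleton, Measure.smul_apply,
    poissonMeasure_singleton, poissonMeasure_singleton, smul_eq_mul, ← ENNReal.ofReal_coe_nnreal,
    ← ENNReal.ofReal_mul (by positivity), ← ENNReal.ofReal_mul (by positivity)]
  have hexp : exp ((a - 1) * r) * exp (-(a * r)) = exp (-r) := by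
    rw [← exp_add]; ring_nf
  push_cast
  rw [mul_pow, ← hexp]
  ring_nf

lemma poissonMeasure_prod_withDensity_pow {r₁ r₂ a b : ℝ≥0} (h : a * r₁ + b * r₂ = r₁ + r₂) :
    ((poissonMeasure r₁).prod (poissonMeasure r₂)).withDensity
        (fun p => ((a ^ p.1 * b ^ p.2 : ℝ≥0) : ℝ≥0∞)) =
      (poissonMeasure (a * r₁)).prod (poissonMeasure (b * r₂)) := by
  have h₀ : ((a : ℝ) - 1) * r₁ + (b - 1) * r₂ = 0 := by
    have := congrArg ((↑) : ℝ≥0 → ℝ) h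
    push_cast at this
    linarith
  simp_rw [ENNReal.coe_mul]
  rw [← prod_withDensity (f := fun n => ((a ^ n : ℝ≥0) : ℝ≥0∞))
      (g := fun n => ((b ^ n : ℝ≥0) : ℝ≥0∞)) (by fun_prop) (by fun_prop),
    poissonMeasure_withDensity_pow, poissonMeasure_withDensity_pow, Measure.prod_smul_left,
    Measure.prod_smul_right, smul_smul, ← ENNReal.ofReal_mul (exp_nonneg _), ← exp_add, h₀,
    exp_zero, ENNReal.ofReal_one, one_smul]

lemma integral_mul_pow_mul_pow_poissonMeasure_prod {r₁ r₂ a b : ℝ≥0}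
    (h : a * r₁ + b * r₂ = r₁ + r₂) (F : ℕ × ℕ → ℝ) :
    ∫ p, F p * ((a : ℝ) ^ p.1 * (b : ℝ) ^ p.2) ∂(poissonMeasure r₁).prod (poissonMeasure r₂) =
      ∫ p, F p ∂(poissonMeasure (a * r₁)).prod (poissonMeasure (b * r₂)) := by
  rw [← poissonMeasure_prod_withDensity_pow h,
    integral_withDensity_eq_integral_smul (by fun_prop)]
  simp only [NNReal.smul_def, smul_eq_mul, NNReal.coe_mul, NNReal.coe_pow, mul_comm]

lemma integral_natCast_sub_poissonMeasure_prod (r₁ r₂ : ℝ≥0) :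
    ∫ p : ℕ × ℕ, ((p.1 : ℝ) - p.2) ∂(poissonMeasure r₁).prod (poissonMeasure r₂) = r₁ - r₂ := by
  rw [integral_sub ((integrable_natCast_poissonMeasure r₁).comp_fst _)
    ((integrable_natCast_poissonMeasure r₂).comp_snd _), integral_fun_fst, integral_fun_snd]
  simp [integral_natCast_poissonMeasure]

lemma variance_natCast_sub_poissonMeasure_prod (r₁ r₂ : ℝ≥0) :
    Var[fun p : ℕ × ℕ => (p.1 : ℝ) - p.2; (poissonMeasure r₁).prod (poissonMeasure r₂)] =
      r₁ + r₂ := by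
  simp_rw [sub_eq_add_neg]
  rw [variance_add_prod (Y := fun n : ℕ => -(n : ℝ)) (memLp_natCast_poissonMeasure r₁)
    (memLp_natCast_poissonMeasure r₂).neg, variance_fun_neg, variance_natCast_poissonMeasure,
    variance_natCast_poissonMeasure]

end ProbabilityTheory

theorem variance_preserving_measure_change_general
    {Ω : Type*} [MeasurableSpace Ω] (μ : Measure Ω) [IsProbabilityMeasure μ]
    (lp lm t : ℝ) (hlp : 0 < lp) (hlm : 0 < lm) (ht : 0 < t)
    (d : ℝ)
    (ltp ltm : ℝ) (hltp : 0 < ltp) (hltm : 0 < ltm)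
    (hvar : ltp + ltm = lp + lm)
    (Np Nm : Ω → ℕ) (hNp : Measurable Np) (hNm : Measurable Nm)
    (hNpd : Measure.map Np μ = poissonMeasure ((lp * t).toNNReal))
    (hNmd : Measure.map Nm μ = poissonMeasure ((lm * t).toNNReal))
    (hind : IndepFun Np Nm μ) :
    ∫ ω, (d * ((Np ω : ℝ) - (Nm ω : ℝ)) - d * (ltp - ltm) * t) ^ 2 *
        Real.exp ((Np ω : ℝ) * Real.log (ltp / lp) + (Nm ω : ℝ) * Real.log (ltm / lm)) ∂μ =
      d ^ 2 * (lp + lm) * t := by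
  set r₁ := (lp * t).toNNReal
  set r₂ := (lm * t).toNNReal
  set a := (ltp / lp).toNNReal
  set b := (ltm / lm).toNNReal
  have ha : (a : ℝ) = ltp / lp := Real.coe_toNNReal _ (by positivity)
  have hb : (b : ℝ) = ltm / lm := Real.coe_toNNReal _ (by positivity)
  have har₁ : ((a * r₁ : ℝ≥0) : ℝ) = ltp * t := by
    rw [NNReal.coe_mul, ha, Real.coe_toNNReal _ (by positivity)]; field_simp
  have hbr₂ : ((b * r₂ : ℝ≥0) : ℝ) = ltm * t := by
    rw [NNReal.coe_mul, hb, Real.coe_toNNReal _ (by positivity)]; field_simp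
  have htilt : a * r₁ + b * r₂ = r₁ + r₂ := by
    refine NNReal.coe_injective ?_
    rw [NNReal.coe_add, NNReal.coe_add, har₁, hbr₂, Real.coe_toNNReal _ (by positivity),
      Real.coe_toNNReal _ (by positivity)]
    linear_combination t * hvar
  have hlaw : μ.map (fun ω => (Np ω, Nm ω)) = (poissonMeasure r₁).prod (poissonMeasure r₂) := by
    rw [(indepFun_iff_map_prod_eq_prod_map_map hNp.aemeasurable hNm.aemeasurable).1 hind,
      hNpd, hNmd]
  have hZ (m n : ℕ) :
      exp (m * log (ltp / lp) + n * log (ltm / lm)) = (a : ℝ) ^ m * (b : ℝ) ^ n := by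
    rw [exp_add, exp_nat_mul, exp_nat_mul, exp_log (by positivity), exp_log (by positivity), ha, hb]
  let F : ℕ × ℕ → ℝ := fun p => (d * ((p.1 : ℝ) - p.2) - d * (ltp - ltm) * t) ^ 2
  calc _ = ∫ p, F p * ((a : ℝ) ^ p.1 * (b : ℝ) ^ p.2) ∂μ.map (fun ω => (Np ω, Nm ω)) := by
        rw [integral_map (hNp.prodMk hNm).aemeasurable .of_discrete]
        simp only [F, hZ]
    _ = ∫ p, F p ∂(poissonMeasure (a * r₁)).prod (poissonMeasure (b * r₂)) := by
        rw [hlaw, integral_mul_pow_mul_pow_poissonMeasure_prod htilt]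
    _ = d ^ 2 * Var[fun p : ℕ × ℕ => (p.1 : ℝ) - p.2;
          (poissonMeasure (a * r₁)).prod (poissonMeasure (b * r₂))] := by
        rw [variance_eq_integral .of_discrete, integral_natCast_sub_poissonMeasure_prod,
          har₁, hbr₂, ← integral_const_mul]
        congr 1 with p
        ring
    _ = d ^ 2 * (lp + lm) * t := by
        rw [variance_natCast_sub_poissonMeasure_prod, har₁, hbr₂]
        linear_combination d ^ 2 * t * hvar

/-- Variance preservation: if the new intensities satisfy `ltp + ltm = lp + lm`, then under
the measure `Q` with density `Z = exp(N₊ log(ltp/lp) + N₋ log(ltm/lm))` the variance of the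
log-return `X = δ(N₊ - N₋)` equals its variance under `P`:
`E[(δ(N₊ - N₋) - δ(ltp - ltm) t)² Z] = δ² (lp + lm) t`. -/
theorem variance_preserving_measure_change
    {Ω : Type*} [MeasurableSpace Ω] (μ : Measure Ω) [IsProbabilityMeasure μ]
    (lp lm t : ℝ) (hlp : 0 < lp) (hlm : 0 < lm) (ht : 0 < t)
    (d : ℝ) (hd : 0 < d)
    (ltp ltm : ℝ) (hltp : 0 < ltp) (hltm : 0 < ltm)
    (hvar : ltp + ltm = lp + lm)
    (Np Nm : Ω → ℕ) (hNp : Measurable Np) (hNm : Measurable Nm)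
    (hNpd : Measure.map Np μ = poissonMeasure ((lp * t).toNNReal))
    (hNmd : Measure.map Nm μ = poissonMeasure ((lm * t).toNNReal))
    (hind : IndepFun Np Nm μ) :
    ∫ ω, (d * ((Np ω : ℝ) - (Nm ω : ℝ)) - d * (ltp - ltm) * t) ^ 2 *
        Real.exp ((Np ω : ℝ) * Real.log (ltp / lp) + (Nm ω : ℝ) * Real.log (ltm / lm)) ∂μ =
      d ^ 2 * (lp + lm) * t :=
  variance_preserving_measure_change_general μ lp lm t hlp hlm ht d ltp ltm hltp hltm hvar Np Nm hNp
    hNm hNpd hNmd hind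
end
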